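/- Let A be a Banach *-algebra with proper involution and let α be the 2×2 upper-triangular matrix over A with diagonal entries a, c and (1,2)-entry b, where a and c are generalized right group invertible. If (1 − a a_r^⑥)b = 0 and b(1 − c c_r^⑥) = 0, then α is generalized right group invertible in M₂(A), and α_r^⑥ is the matrix with first row (a_r^⑥, −a_r^⑥ b c_r^⑥) and second row (0, c_r^⑥). -/

import Mathlib

open Filter Topology

attribute [local instance] Matrix.linftyOpNormedRing Matrix.linftyOpNormedAlgebra

/-- `x` is a generalized right group inverse of `a`. -/
def IsGRGInv {R : Type*} [NormedRing R] [StarRing R] (a x : R) : Prop :=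
  x = a * x ^ 2 ∧ star (star a * a ^ 2 * x) = star a * a ^ 2 * x ∧
    Tendsto (fun n : ℕ => ‖a ^ n - a * x * a ^ n‖ ^ (1 / (n : ℝ))) atTop (𝓝 0)

/-!
Write `M = !![a, b; 0, c]` and `Y = !![x, -(x * b * z); 0, z]`. The hypothesis `(1 - a x) b = 0`
makes `M Y = !![a x, 0; 0, c z]`, from which `Y = M Y²` is immediate. Powers of `M` have the form
`!![aⁿ, aⁿ wₙ; 0, cⁿ]` with `wₙ` growing at most geometrically, so `Mⁿ - M Y Mⁿ` has entries
`aⁿ - a x aⁿ`, `(aⁿ - a x aⁿ) wₙ` and `cⁿ - c z cⁿ`; the root condition `‖uₙ‖^(1/n) → 0` says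
`uₙ = O(rⁿ)` for every `r > 0`, and in that form it passes to each entry and hence to the matrix.
Finally `star M * M² * Y` has off-diagonal entries `a* b` and `b* a² x`; self-adjointness of
`a* a² x` gives `(a² x)* (a x) = a* (a x)`, and multiplying by `b = a x b` shows
the two entries are adjoint to each other.
-/

open Asymptotics

theorem tendsto_norm_rpow_one_div_nhds_zero_iff {E : Type*} [SeminormedAddCommGroup E]
    (u : ℕ → E) :
    Tendsto (fun n : ℕ => ‖u n‖ ^ (1 / (n : ℝ))) atTop (𝓝 0) ↔
      ∀ r > (0 : ℝ), u =O[atTop] fun n => r ^ n := by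
  constructor
  · intro h r hr
    refine IsBigO.of_bound 1 ?_
    filter_upwards [h.eventually_lt_const hr, eventually_ne_atTop 0] with n hlt hn
    rw [one_mul, norm_pow, Real.norm_of_nonneg hr.le,
      ← Real.rpow_inv_natCast_pow (norm_nonneg (u n)) hn, ← one_div]
    exact pow_le_pow_left₀ (by positivity) hlt.le n
  · intro h
    refine tendsto_order.2 ⟨fun s hs => Eventually.of_forall fun n => hs.trans_le (by positivity),
      fun ε hε => ?_⟩
    obtain ⟨C, hC⟩ := (h (ε / 4) (by positivity)).bound
    have hC2 : ∀ᶠ n : ℕ in atTop, C ≤ 2 ^ n :=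
      (tendsto_pow_atTop_atTop_of_one_lt one_lt_two).eventually_ge_atTop C
    filter_upwards [hC, hC2, eventually_ne_atTop 0] with n hn hCn hn0
    have hbound : ‖u n‖ ≤ (ε / 2) ^ n :=
      calc ‖u n‖ ≤ C * (ε / 4) ^ n := by
            rwa [norm_pow, Real.norm_of_nonneg (by positivity)] at hn
        _ ≤ 2 ^ n * (ε / 4) ^ n := by gcongr
        _ = (ε / 2) ^ n := by rw [← mul_pow]; ring_nf
    calc ‖u n‖ ^ (1 / (n : ℝ)) ≤ ((ε / 2) ^ n) ^ (1 / (n : ℝ)) := by gcongr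
      _ = ε / 2 := by rw [one_div, Real.pow_rpow_inv_natCast (by positivity) hn0]
      _ < ε := half_lt_self hε

theorem Matrix.linftyOp_isBigO_of_forall_isBigO_apply {α ι R F : Type*} [Fintype ι]
    [DecidableEq ι] [NormedRing R] [Norm F] {l : Filter α} {D : α → Matrix ι ι R} {g : α → F}
    (h : ∀ i j, (fun t => D t i j) =O[l] g) : D =O[l] g := by
  have hsum : (fun t => ∑ i, ∑ j, ‖D t i j‖) =O[l] g :=
    IsBigO.fun_sum fun i _ => IsBigO.fun_sum fun j _ => (h i j).norm_left
  refine IsBigO.trans (IsBigO.of_bound 1 (Eventually.of_forall fun t => ?_)) hsum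
  have hsup : (Finset.univ.sup fun i => ∑ j, ‖D t i j‖₊) ≤ ∑ i, ∑ j, ‖D t i j‖₊ :=
    Finset.sup_le fun i hi =>
      Finset.single_le_sum (f := fun i => ∑ j, ‖D t i j‖₊) (fun i _ => zero_le) hi
  rw [one_mul, Real.norm_of_nonneg (by positivity), Matrix.linfty_opNorm_def]
  simpa only [NNReal.coe_sum, coe_nnnorm] using NNReal.coe_le_coe.2 hsup

theorem isBigO_mul_pow_of_forall_isBigO_pow {R : Type*} [NormedRing R] {d w : ℕ → R} {K r : ℝ}
    (hK : 0 < K) (hr : 0 < r) (hd : ∀ s > (0 : ℝ), d =O[atTop] fun n => s ^ n)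
    (hw : w =O[atTop] fun n => K ^ n) :
    (fun n => d n * w n) =O[atTop] fun n => r ^ n :=
  ((hd (r / K) (by positivity)).mul hw).congr_right fun n => by
    rw [← mul_pow, div_mul_cancel₀ r hK.ne']

section Ring

variable {R : Type*} [Ring R] {a b c x z : R}

theorem mul_mul_self_of_eq_mul_sq (hx : x = a * x ^ 2) : a * x * x = x := by
  rw [mul_assoc, ← sq, ← hx]

/-- `cornerSeq x b c n = ∑ k < n, x ^ (k + 1) * b * c ^ k`. -/
def cornerSeq (x b c : R) : ℕ → R
  | 0 => 0
  | n + 1 => x * (b + cornerSeq x b c n * c)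

theorem mul_mul_cornerSeq (hx : x = a * x ^ 2) (n : ℕ) :
    a * x * cornerSeq x b c n = cornerSeq x b c n := by
  cases n with
  | zero => simp [cornerSeq]
  | succ n => rw [cornerSeq, ← mul_assoc, mul_mul_self_of_eq_mul_sq hx]

theorem triangular_pow (hx : x = a * x ^ 2) (hb : a * x * b = b) (n : ℕ) :
    !![a, b; 0, c] ^ n = !![a ^ n, a ^ n * cornerSeq x b c n; 0, c ^ n] := by
  induction n with
  | zero => simp [cornerSeq, Matrix.one_fin_two]
  | succ n ih =>
    have hcorner : a ^ (n + 1) * cornerSeq x b c (n + 1) =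
        a ^ n * b + a ^ n * cornerSeq x b c n * c :=
      calc a ^ (n + 1) * cornerSeq x b c (n + 1)
          = a ^ n * (a * x * b + a * x * cornerSeq x b c n * c) := by
            rw [cornerSeq, pow_succ]; noncomm_ring
        _ = _ := by rw [hb, mul_mul_cornerSeq hx]; noncomm_ring
    rw [pow_succ, ih, Matrix.mul_fin_two, hcorner, pow_succ, pow_succ]
    simp

theorem triangular_mul_eq_diagonal (hb : a * x * b = b) :
    !![a, b; 0, c] * !![x, -(x * b * z); 0, z] = !![a * x, 0; 0, c * z] := by
  have hcorner : a * (x * b * z) = b * z := by rw [← mul_assoc, ← mul_assoc, hb]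
  rw [Matrix.mul_fin_two]
  simp [hcorner]

theorem triangular_eq_mul_sq (hx : x = a * x ^ 2) (hz : z = c * z ^ 2) (hb : a * x * b = b) :
    !![x, -(x * b * z); 0, z] = !![a, b; 0, c] * !![x, -(x * b * z); 0, z] ^ 2 := by
  have hcorner : a * x * -(x * b * z) = -(x * b * z) := by
    rw [mul_neg, ← mul_assoc, ← mul_assoc, mul_mul_self_of_eq_mul_sq hx]
  rw [sq, ← mul_assoc, triangular_mul_eq_diagonal hb, Matrix.mul_fin_two]
  simp [hcorner, mul_mul_self_of_eq_mul_sq hx, mul_mul_self_of_eq_mul_sq hz]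

theorem triangular_pow_sub_mul_pow (hx : x = a * x ^ 2) (hb : a * x * b = b) (n : ℕ) :
    !![a, b; 0, c] ^ n - !![a, b; 0, c] * !![x, -(x * b * z); 0, z] * !![a, b; 0, c] ^ n =
      !![a ^ n - a * x * a ^ n, (a ^ n - a * x * a ^ n) * cornerSeq x b c n;
        0, c ^ n - c * z * c ^ n] := by
  rw [triangular_mul_eq_diagonal hb, triangular_pow hx hb, Matrix.mul_fin_two]
  ext i j
  fin_cases i <;> fin_cases j <;> simp [sub_mul, mul_assoc]

variable [StarRing R]

theorem star_sq_mul_mul_mul_eq (hx1 : x = a * x ^ 2)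
    (hx2 : star (star a * a ^ 2 * x) = star a * a ^ 2 * x) :
    star (a ^ 2 * x) * (a * x) = star a * (a * x) := by
  have h : star (a ^ 2 * x) * a = star a * a ^ 2 * x := by
    rw [← hx2]; simp only [star_mul, star_star, mul_assoc]
  calc star (a ^ 2 * x) * (a * x) = star a * a * (a * x * x) := by
        rw [← mul_assoc, h]; noncomm_ring
    _ = star a * (a * x) := by rw [mul_mul_self_of_eq_mul_sq hx1, mul_assoc]

theorem isSelfAdjoint_star_triangular_mul_sq_mul (hx1 : x = a * x ^ 2)
    (hx2 : star (star a * a ^ 2 * x) = star a * a ^ 2 * x)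
    (hz2 : star (star c * c ^ 2 * z) = star c * c ^ 2 * z)
    (hb : a * x * b = b) (hbc : b * (c * z) = b) :
    IsSelfAdjoint (star !![a, b; 0, c] * !![a, b; 0, c] ^ 2 * !![x, -(x * b * z); 0, z]) := by
  have hab : star (a ^ 2 * x) * b = star a * b :=
    calc star (a ^ 2 * x) * b = star (a ^ 2 * x) * (a * x) * b := by
          rw [mul_assoc _ (a * x), hb]
      _ = star a * b := by rw [star_sq_mul_mul_mul_eq hx1 hx2, mul_assoc, hb]
  have hba : star b * (a ^ 2 * x) = star b * a := by
    simpa only [star_mul, star_star] using congrArg star hab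
  have hN : star !![a, b; 0, c] * (!![a, b; 0, c] * !![a * x, 0; 0, c * z]) =
      !![star a * (a * (a * x)), star a * b;
        star b * (a * (a * x)), star b * b + star c * (c * (c * z))] := by
    ext i j
    fin_cases i <;> fin_cases j <;>
      simp [Matrix.mul_apply, Matrix.star_apply, Fin.sum_univ_two, hbc]
  simp only [sq, mul_assoc] at hx2 hz2 hba
  rw [IsSelfAdjoint, sq, mul_assoc, mul_assoc, triangular_mul_eq_diagonal hb, hN]
  ext i j
  fin_cases i <;> fin_cases j <;>
    simp only [Fin.zero_eta, Fin.mk_one, Fin.isValue, Matrix.star_apply, Matrix.of_apply,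
      Matrix.cons_val', Matrix.cons_val_zero, Matrix.cons_val_one, Matrix.cons_val_fin_one,
      star_add]
  · exact hx2
  · rw [hba, star_mul, star_star]
  · rw [hba, star_mul, star_star]
  · rw [hz2, star_mul, star_star]

end Ring

section NormedRing

variable {R : Type*} [NormedRing R]

theorem norm_cornerSeq_le (x b c : R) (n : ℕ) :
    ‖cornerSeq x b c n‖ ≤ ‖x‖ * ‖b‖ * (1 + ‖x‖ * ‖c‖) ^ n := by
  induction n with
  | zero => simp only [cornerSeq, norm_zero, pow_zero, mul_one]; positivity
  | succ n ih =>
    have hpow : 1 ≤ (1 + ‖x‖ * ‖c‖) ^ n :=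
      one_le_pow₀ (le_add_of_nonneg_right (by positivity))
    calc ‖cornerSeq x b c (n + 1)‖ ≤ ‖x‖ * (‖b‖ + ‖cornerSeq x b c n‖ * ‖c‖) := by
          rw [cornerSeq]
          refine (norm_mul_le _ _).trans ?_
          gcongr
          exact (norm_add_le _ _).trans (by gcongr; exact norm_mul_le _ _)
      _ ≤ ‖x‖ * (‖b‖ * (1 + ‖x‖ * ‖c‖) ^ n + ‖x‖ * ‖b‖ * (1 + ‖x‖ * ‖c‖) ^ n * ‖c‖) := by
          gcongr
          exact le_mul_of_one_le_right (norm_nonneg b) hpow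
      _ = ‖x‖ * ‖b‖ * (1 + ‖x‖ * ‖c‖) ^ (n + 1) := by ring

theorem isBigO_cornerSeq (x b c : R) :
    cornerSeq x b c =O[atTop] fun n => (1 + ‖x‖ * ‖c‖) ^ n :=
  IsBigO.of_bound (‖x‖ * ‖b‖) (Eventually.of_forall fun n => by
    rw [norm_pow, Real.norm_of_nonneg (by positivity)]
    exact norm_cornerSeq_le x b c n)

theorem tendsto_norm_triangular_pow_sub_mul_pow_rpow {a b c x z : R}
    (hx1 : x = a * x ^ 2) (hb : a * x * b = b)
    (hx3 : Tendsto (fun n : ℕ => ‖a ^ n - a * x * a ^ n‖ ^ (1 / (n : ℝ))) atTop (𝓝 0))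
    (hz3 : Tendsto (fun n : ℕ => ‖c ^ n - c * z * c ^ n‖ ^ (1 / (n : ℝ))) atTop (𝓝 0)) :
    Tendsto (fun n : ℕ => ‖!![a, b; 0, c] ^ n -
      !![a, b; 0, c] * !![x, -(x * b * z); 0, z] * !![a, b; 0, c] ^ n‖ ^ (1 / (n : ℝ)))
      atTop (𝓝 0) := by
  rw [tendsto_norm_rpow_one_div_nhds_zero_iff] at hx3 hz3 ⊢
  intro r hr
  simp_rw [triangular_pow_sub_mul_pow hx1 hb]
  refine Matrix.linftyOp_isBigO_of_forall_isBigO_apply fun i j => ?_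
  fin_cases i <;> fin_cases j
  · simpa using hx3 r hr
  · simpa using
      isBigO_mul_pow_of_forall_isBigO_pow (by positivity) hr hx3 (isBigO_cornerSeq x b c)
  · simpa using isBigO_zero _ _
  · simpa using hz3 r hr

end NormedRing

theorem grg_triangular_matrix_general
    {A : Type*} [NormedRing A] [StarRing A]
    (a b c x z : A) (hx : IsGRGInv a x) (hz : IsGRGInv c z)
    (h1 : (1 - a * x) * b = 0) (h2 : b * (1 - c * z) = 0) :
    IsGRGInv (Matrix.of ![![a, b], ![0, c]]) (Matrix.of ![![x, -(x * b * z)], ![0, z]]) := by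
  obtain ⟨hx1, hx2, hx3⟩ := hx
  obtain ⟨hz1, hz2, hz3⟩ := hz
  have hb : a * x * b = b := by
    rw [sub_mul, one_mul, sub_eq_zero] at h1
    exact h1.symm
  have hbc : b * (c * z) = b := by
    rw [mul_sub, mul_one, sub_eq_zero] at h2
    exact h2.symm
  exact ⟨triangular_eq_mul_sq hx1 hz1 hb,
    (isSelfAdjoint_star_triangular_mul_sq_mul hx1 hx2 hz2 hb hbc).star_eq,
    tendsto_norm_triangular_pow_sub_mul_pow_rpow hx1 hb hx3 hz3⟩

/-- If `a`, `c` are generalized right group invertible with inverses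
`x`, `z`, and (1 − ax)b = 0, b(1 − cz) = 0, then the upper triangular matrix
![![a, b], ![0, c]] is generalized right group invertible with inverse
![![x, −x b z], ![0, z]]. -/
theorem grg_triangular_matrix
    {A : Type*} [NormedRing A] [StarRing A] [NormedAlgebra ℂ A] [CompleteSpace A]
    (hproper : ∀ x : A, star x * x = 0 → x = 0)
    (a b c x z : A) (hx : IsGRGInv a x) (hz : IsGRGInv c z)
    (h1 : (1 - a * x) * b = 0) (h2 : b * (1 - c * z) = 0) :
    IsGRGInv (Matrix.of ![![a, b], ![0, c]]) (Matrix.of ![![x, -(x * b * z)], ![0, z]]) :=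
  grg_triangular_matrix_general a b c x z hx hz h1 h2
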